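/- An irreducible representation σ of B_n has the property that its restriction to the subgroup S_n ≤ B_n contains a copy of the trivial S_n-representation if and only if σ is isomorphic to one of the representations V_n^i, 0 ≤ i ≤ n (i.e., σ corresponds to the pair of partitions ([n-i],[i]) for some 0 ≤ i ≤ n). -/

import Mathlib

/-
Restricted to the abelian normal subgroup `(C₂)ⁿ`, `V` splits into the eigenspaces of the
characters `s_A ↦ (-1) ^ |A ∩ S|`, and the corresponding projections `P_S` sum to the identity.
If `v ≠ 0` is `Sₙ`-invariant, some `P_{S₀} v` is nonzero; since `π (P_S v) = P_{π S} v` and `Sₙ`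
is transitive on subsets of a given size, all `P_A v` with `|A| = |S₀|` are nonzero. They are
eigenvectors for distinct characters, hence independent, and their span is `Bₙ`-stable, hence
all of `V`. In this basis `σ` is `V_n^i` with `i = |S₀|`. Conversely, the sum of the standard
basis vectors of `V_n^i` is `Sₙ`-invariant.
-/
abbrev Nn (n : ℕ) : Type := Multiplicative (Fin n → ZMod 2)

def permAddEquiv {n : ℕ} (π : Equiv.Perm (Fin n)) : (Fin n → ZMod 2) ≃+ (Fin n → ZMod 2) where
  toFun f := f ∘ π.symm
  invFun f := f ∘ π
  left_inv f := by funext i; simp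
  right_inv f := by funext i; simp
  map_add' f g := rfl

/-- `Sₙ` acting on `(C₂)ⁿ` by permuting coordinates. -/
def permAut (n : ℕ) : Equiv.Perm (Fin n) →* MulAut (Nn n) where
  toFun π := AddEquiv.toMultiplicative (permAddEquiv π)
  map_one' := by ext f; rfl
  map_mul' π ρ := by ext f; rfl

/-- The hyperoctahedral group `Bₙ = (C₂)ⁿ ⋊ Sₙ`. -/
abbrev Bn (n : ℕ) : Type := SemidirectProduct (Nn n) (Equiv.Perm (Fin n)) (permAut n)

/-- the diagonal element `s_A`, with `-1` exactly at positions in `A`. -/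
def sgn {n : ℕ} (A : Finset (Fin n)) : Nn n :=
  Multiplicative.ofAdd (fun i => if i ∈ A then (1 : ZMod 2) else 0)

open Finset SemidirectProduct Function
open scoped symmDiff

theorem exists_perm_image_eq {α : Type*} [DecidableEq α] {S A : Finset α}
    (h : S.card = A.card) : ∃ π : Equiv.Perm α, S.image π = A := by
  obtain ⟨π, hπ⟩ := (Set.powersetCard.isPretransitive (α := α) (n := A.card)).exists_smul_eq
    ⟨S, h⟩ ⟨A, rfl⟩
  exact ⟨π, by simpa [Subtype.ext_iff, smul_finset_def] using hπ⟩

def permImage {α : Type*} [DecidableEq α] (π : Equiv.Perm α) (i : ℕ)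
    (A : {A : Finset α // A.card = i}) : {A : Finset α // A.card = i} :=
  ⟨A.1.image π, by rw [card_image_of_injective _ π.injective]; exact A.2⟩

theorem permImage_bijective {α : Type*} [DecidableEq α] [Finite α] (π : Equiv.Perm α) (i : ℕ) :
    Bijective (permImage π i) :=
  Finite.injective_iff_bijective.1 fun _ _ h =>
    Subtype.ext (image_injective π.injective (congrArg Subtype.val h))

theorem LinearMap.apply_one_of_apply_single {ι R : Type*} [Fintype ι] [DecidableEq ι]
    [Semiring R] (L : (ι → R) →ₗ[R] ι → R) {f : ι → ι} (hf : Bijective f)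
    (h : ∀ i, L (Pi.single i 1) = Pi.single (f i) 1) : L 1 = 1 := by
  rw [← univ_sum_single 1]
  simp only [Pi.one_apply, map_sum, h]
  exact hf.sum_comp fun i => Pi.single i 1

theorem Representation.exists_conj_basis {k G ι V : Type*} [CommSemiring k] [Monoid G]
    [AddCommMonoid V] [Module k V] [Finite ι] [DecidableEq ι] (σ : Representation k G V)
    (b : Module.Basis ι k V) :
    ∃ ρ : Representation k G (ι → k),
      (∀ g i, ρ g (Pi.single i 1) = b.equivFun (σ g (b i))) ∧
      ∀ g v, b.equivFun (σ g v) = ρ g (b.equivFun v) :=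
  ⟨b.equivFun.conjRingEquiv.toMonoidHom.comp σ, fun g i => by simp, fun g v => by
    change _ = b.equivFun (σ g (b.equivFun.symm _))
    rw [LinearEquiv.symm_apply_apply]⟩

section Walsh

variable {α : Type*} [DecidableEq α]

/-- The value at `s_A` of the character of `(C₂)ⁿ` indexed by `S`. -/
noncomputable def walsh (A S : Finset α) : ℂ := (-1) ^ (A ∩ S).card

theorem walsh_comm (A S : Finset α) : walsh A S = walsh S A := by
  rw [walsh, walsh, inter_comm]

theorem walsh_eq_prod (A S : Finset α) : walsh A S = ∏ j ∈ S, if j ∈ A then -1 else 1 := by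
  rw [prod_ite, prod_const, prod_const_one, mul_one, filter_mem_eq_inter, walsh, inter_comm]

theorem walsh_symmDiff_left (A B S : Finset α) : walsh (A ∆ B) S = walsh A S * walsh B S := by
  simp only [walsh_eq_prod, ← prod_mul_distrib, mem_symmDiff]
  refine prod_congr rfl fun j _ => ?_
  by_cases j ∈ A <;> by_cases j ∈ B <;> simp [*]

theorem walsh_image {β : Type*} [DecidableEq β] {f : α → β} (hf : Injective f) (A S : Finset α) :
    walsh (A.image f) (S.image f) = walsh A S := by
  rw [walsh, walsh, ← image_inter _ _ hf, card_image_of_injective _ hf]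

theorem sum_walsh [Fintype α] (A : Finset α) :
    ∑ S, walsh A S = if A = ∅ then 2 ^ Fintype.card α else 0 := by
  have hprod : ∑ S, walsh A S = ∏ j, (1 + if j ∈ A then -1 else 1) := by
    rw [prod_one_add, powerset_univ]
    simp only [walsh_eq_prod]
  rw [hprod]
  split_ifs with hA
  · simp [hA, card_univ]
    norm_num
  · obtain ⟨a, ha⟩ := nonempty_iff_ne_empty.2 hA
    exact prod_eq_zero (mem_univ a) (by simp [ha])

end Walsh

section Sgn

variable {n : ℕ}

theorem sgn_symmDiff (A B : Finset (Fin n)) : sgn (A ∆ B) = sgn A * sgn B := by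
  refine Multiplicative.toAdd.injective (funext fun i => ?_)
  simp only [sgn, toAdd_ofAdd, toAdd_mul, Pi.add_apply, mem_symmDiff]
  by_cases hA : i ∈ A <;> by_cases hB : i ∈ B <;> simp [hA, hB]
  rfl

theorem sgn_empty : sgn (∅ : Finset (Fin n)) = 1 :=
  rfl

theorem sgn_surjective : Surjective (sgn (n := n)) := by
  intro x
  refine ⟨univ.filter fun i => x.toAdd i = 1, Multiplicative.toAdd.injective (funext fun i => ?_)⟩
  simp only [sgn, toAdd_ofAdd, mem_filter, mem_univ, true_and]
  generalize x.toAdd i = z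
  fin_cases z <;> rfl

theorem permAut_sgn (π : Equiv.Perm (Fin n)) (A : Finset (Fin n)) :
    permAut n π (sgn A) = sgn (A.image π) := by
  rw [← Equiv.coe_toEmbedding, ← map_eq_image]
  refine Multiplicative.toAdd.injective (funext fun i => ?_)
  simp [sgn, permAut, permAddEquiv, mem_map_equiv]

theorem inr_mul_inl_sgn (π : Equiv.Perm (Fin n)) (A : Finset (Fin n)) :
    (inr π : Bn n) * inl (sgn A) = inl (sgn (A.image π)) * inr π := by
  rw [← permAut_sgn, inl_aut, mul_assoc, ← map_mul, inv_mul_cancel, map_one, mul_one]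

end Sgn

section WalshProjection

variable {n : ℕ} {V : Type*} [AddCommGroup V] [Module ℂ V] (τ : Representation ℂ (Nn n) V)

noncomputable def walshProj (S : Finset (Fin n)) : Module.End ℂ V :=
  ((2 : ℂ) ^ n)⁻¹ • ∑ A, walsh A S • τ (sgn A)

theorem walshProj_apply (S : Finset (Fin n)) (v : V) :
    walshProj τ S v = ((2 : ℂ) ^ n)⁻¹ • ∑ A, walsh A S • τ (sgn A) v := by
  simp [walshProj, LinearMap.sum_apply]

theorem apply_sgn_walshProj (B S : Finset (Fin n)) (v : V) :
    τ (sgn B) (walshProj τ S v) = walsh B S • walshProj τ S v := by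
  rw [walshProj_apply, map_smul, smul_comm]
  congr 1
  rw [map_sum, smul_sum]
  rw [← (symmDiff_right_involutive B).bijective.sum_comp]
  refine sum_congr rfl fun A _ => ?_
  rw [map_smul, ← Module.End.mul_apply, ← map_mul, ← sgn_symmDiff,
    smul_smul, walsh_symmDiff_left, symmDiff_symmDiff_cancel_left]

theorem sum_walshProj (v : V) : ∑ S, walshProj τ S v = v := by
  simp only [walshProj_apply, ← smul_sum]
  rw [sum_comm]
  simp only [← sum_smul, sum_walsh, Fintype.card_fin, ite_smul, zero_smul,
    sum_ite_eq', mem_univ, if_true, sgn_empty, map_one, Module.End.one_apply, smul_smul]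
  rw [inv_mul_cancel₀ (by norm_num), one_smul]

theorem exists_walshProj_ne_zero {v : V} (hv : v ≠ 0) : ∃ S, walshProj τ S v ≠ 0 := by
  by_contra! h
  exact hv (by rw [← sum_walshProj τ v, sum_eq_zero fun S _ => h S])

theorem walshProj_eq_ite {S : Finset (Fin n)} {w : V} (hw : ∀ B, τ (sgn B) w = walsh B S • w)
    (T : Finset (Fin n)) : walshProj τ T w = if T = S then w else 0 := by
  have hsum : ∑ A, walsh A T • τ (sgn A) w = ∑ A, walsh (T ∆ S) A • w := by
    refine sum_congr rfl fun A _ => ?_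
    rw [hw, smul_smul, walsh_symmDiff_left, walsh_comm A T, walsh_comm A S]
  rw [walshProj_apply, hsum, ← sum_smul]
  simp only [sum_walsh]
  split_ifs <;> simp_all

theorem linearIndependent_of_walsh_eigen {ι : Type*} {u : ι → V} {S : ι → Finset (Fin n)}
    (hS : Injective S) (hu : ∀ i, u i ≠ 0) (heig : ∀ i B, τ (sgn B) (u i) = walsh B (S i) • u i) :
    LinearIndependent ℂ u := by
  rw [linearIndependent_iff']
  intro s c hc i hi
  have := congrArg (walshProj τ (S i)) hc
  simp only [map_sum, map_smul, walshProj_eq_ite τ (heig _), smul_ite, smul_zero, map_zero] at this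
  rw [sum_eq_single_of_mem i hi fun j _ hji => if_neg (hS.ne hji).symm, if_pos rfl] at this
  exact (smul_eq_zero.1 this).resolve_right (hu i)

end WalshProjection

section Layers

variable {n : ℕ} {V : Type*} [AddCommGroup V] [Module ℂ V] (σ : Representation ℂ (Bn n) V)

theorem walshProj_inr (π : Equiv.Perm (Fin n)) (S : Finset (Fin n)) (v : V) :
    σ (inr π) (walshProj (σ.comp inl) S v) =
      walshProj (σ.comp inl) (S.image π) (σ (inr π) v) := by
  rw [walshProj_apply, walshProj_apply, map_smul, map_sum]
  congr 1
  refine Fintype.sum_bijective _ (image_injective π.injective).bijective_of_finite _ _ fun A => ?_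
  rw [map_smul, walsh_image π.injective, MonoidHom.comp_apply, MonoidHom.comp_apply,
    ← Module.End.mul_apply, ← map_mul, inr_mul_inl_sgn, map_mul, Module.End.mul_apply]

noncomputable def layerVectors (v : V) (i : ℕ) (A : {A : Finset (Fin n) // A.card = i}) : V :=
  walshProj (σ.comp inl) A.1 v

variable {σ} {v : V} {i : ℕ}

theorem inr_layerVectors (hv : ∀ π, σ (inr π) v = v) (π : Equiv.Perm (Fin n))
    (A : {A : Finset (Fin n) // A.card = i}) :
    σ (inr π) (layerVectors σ v i A) = layerVectors σ v i (permImage π i A) := by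
  rw [layerVectors, walshProj_inr, hv]
  rfl

theorem inl_sgn_layerVectors (B : Finset (Fin n)) (A : {A : Finset (Fin n) // A.card = i}) :
    σ (inl (sgn B)) (layerVectors σ v i A) = walsh B A.1 • layerVectors σ v i A :=
  apply_sgn_walshProj (σ.comp inl) B A.1 v

theorem layerVectors_ne_zero (hv : ∀ π, σ (inr π) v = v) {S₀ : Finset (Fin n)}
    (hS₀ : walshProj (σ.comp inl) S₀ v ≠ 0) (A : {A : Finset (Fin n) // A.card = S₀.card}) :
    layerVectors σ v S₀.card A ≠ 0 := by
  obtain ⟨π, hπ⟩ := exists_perm_image_eq A.2.symm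
  rwa [layerVectors, ← hπ, ← hv π, ← walshProj_inr, Ne,
    map_eq_zero_iff _ (σ.apply_bijective _).injective]

theorem linearIndependent_layerVectors (hv : ∀ π, σ (inr π) v = v) {S₀ : Finset (Fin n)}
    (hS₀ : walshProj (σ.comp inl) S₀ v ≠ 0) :
    LinearIndependent ℂ (layerVectors σ v S₀.card) :=
  linearIndependent_of_walsh_eigen (σ.comp inl) Subtype.val_injective
    (layerVectors_ne_zero hv hS₀) fun A B => inl_sgn_layerVectors B A

theorem apply_mem_span_layerVectors (hv : ∀ π, σ (inr π) v = v) (g : Bn n) {w : V}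
    (hw : w ∈ Submodule.span ℂ (Set.range (layerVectors σ v i))) :
    σ g w ∈ Submodule.span ℂ (Set.range (layerVectors σ v i)) := by
  refine Submodule.span_le.2 ?_ (Submodule.apply_mem_span_image_of_mem_span (σ g) hw)
  rintro _ ⟨_, ⟨A, rfl⟩, rfl⟩
  obtain ⟨B, hB⟩ := sgn_surjective g.left
  rw [← inl_left_mul_inr_right g, ← hB, map_mul, Module.End.mul_apply, inr_layerVectors hv,
    inl_sgn_layerVectors]
  exact Submodule.smul_mem _ _ (Submodule.subset_span ⟨_, rfl⟩)

theorem span_layerVectors_eq_top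
    (hirr : ∀ W : Submodule ℂ V, (∀ g : Bn n, ∀ v ∈ W, σ g v ∈ W) → W = ⊥ ∨ W = ⊤)
    (hv : ∀ π, σ (inr π) v = v) {S₀ : Finset (Fin n)} (hS₀ : walshProj (σ.comp inl) S₀ v ≠ 0) :
    Submodule.span ℂ (Set.range (layerVectors σ v S₀.card)) = ⊤ := by
  refine (hirr _ fun g _ => apply_mem_span_layerVectors hv g).resolve_left fun h => ?_
  refine layerVectors_ne_zero hv hS₀ ⟨S₀, rfl⟩ ?_
  rw [← Submodule.mem_bot ℂ, ← h]
  exact Submodule.subset_span ⟨_, rfl⟩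

theorem exists_monomial_basis
    (hirr : ∀ W : Submodule ℂ V, (∀ g : Bn n, ∀ v ∈ W, σ g v ∈ W) → W = ⊥ ∨ W = ⊤)
    (hv0 : v ≠ 0) (hv : ∀ π, σ (inr π) v = v) :
    ∃ (S₀ : Finset (Fin n)) (b : Module.Basis {A : Finset (Fin n) // A.card = S₀.card} ℂ V),
      (∀ π A, σ (inr π) (b A) = b (permImage π _ A)) ∧
      ∀ C A, σ (inl (sgn C)) (b A) = walsh C A.1 • b A := by
  obtain ⟨S₀, hS₀⟩ := exists_walshProj_ne_zero (σ.comp inl) hv0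
  have hli := linearIndependent_layerVectors hv hS₀
  have hspan := (span_layerVectors_eq_top hirr hv hS₀).ge
  refine ⟨S₀, .mk hli hspan, fun π A => ?_, fun C A => ?_⟩ <;> simp only [Module.Basis.mk_apply]
  exacts [inr_layerVectors hv π A, inl_sgn_layerVectors C A]

end Layers

/-- An irreducible representation σ of Bₙ restricted to Sₙ ≤ Bₙ contains a copy of the
trivial Sₙ-representation (equivalently, has a nonzero Sₙ-invariant vector) iff σ is
isomorphic to one of the representations Vₙⁱ, 0 ≤ i ≤ n (the irrep corresponding to
the pair of partitions ([n-i],[i])). -/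
theorem stmt2 (n : ℕ) (V : Type) [AddCommGroup V] [Module ℂ V]
    (σ : Representation ℂ (Bn n) V)
    (hirr : ∀ W : Submodule ℂ V, (∀ g : Bn n, ∀ v ∈ W, σ g v ∈ W) → W = ⊥ ∨ W = ⊤) :
    (∃ v : V, v ≠ 0 ∧ ∀ π : Equiv.Perm (Fin n), σ (SemidirectProduct.inr π) v = v) ↔
    ∃ i : ℕ, i ≤ n ∧
      ∃ ρ : Representation ℂ (Bn n) ({A : Finset (Fin n) // A.card = i} → ℂ),
        (∀ (π : Equiv.Perm (Fin n)) (A : {A : Finset (Fin n) // A.card = i}),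
          ρ (SemidirectProduct.inr π) (Pi.single A 1 : {A : Finset (Fin n) // A.card = i} → ℂ) =
            (Pi.single (⟨A.1.image π, by
              rw [Finset.card_image_of_injective _ π.injective]; exact A.2⟩ :
              {A : Finset (Fin n) // A.card = i}) 1 : {A : Finset (Fin n) // A.card = i} → ℂ)) ∧
        (∀ (C : Finset (Fin n)) (A : {A : Finset (Fin n) // A.card = i}),
          ρ (SemidirectProduct.inl (sgn C))
              (Pi.single A 1 : {A : Finset (Fin n) // A.card = i} → ℂ) =
            ((-1 : ℂ)) ^ ((C ∩ A.1).card) •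
              (Pi.single A 1 : {A : Finset (Fin n) // A.card = i} → ℂ)) ∧
        ∃ e : V ≃ₗ[ℂ] ({A : Finset (Fin n) // A.card = i} → ℂ),
          ∀ (g : Bn n) (v : V), e (σ g v) = ρ g (e v) := by
  constructor
  · rintro ⟨v, hv0, hv⟩
    obtain ⟨S₀, b, hbπ, hbs⟩ := exists_monomial_basis hirr hv0 hv
    obtain ⟨ρ, hρ, he⟩ := σ.exists_conj_basis b
    refine ⟨S₀.card, card_le_univ S₀ |>.trans_eq (Fintype.card_fin n), ρ, fun π A => ?_,
      fun C A => ?_, b.equivFun, he⟩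
    · rw [hρ, hbπ, ← Basis.equivFun_symm_single, LinearEquiv.apply_symm_apply]
      rfl
    · rw [hρ, hbs, map_smul, ← Basis.equivFun_symm_single, LinearEquiv.apply_symm_apply]
      rfl
  · rintro ⟨i, hi, ρ, hρ, -, e, he⟩
    have : Nonempty {A : Finset (Fin n) // A.card = i} := by
      obtain ⟨A, -, hA⟩ := exists_subset_card_eq (hi.trans_eq (card_fin n).symm)
      exact ⟨⟨A, hA⟩⟩
    refine ⟨e.symm 1, by simp, fun π => e.injective ?_⟩
    rw [he, e.apply_symm_apply]
    exact (ρ (inr π)).apply_one_of_apply_single (permImage_bijective π i) (hρ π)
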